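/- arXiv:2305.19895 — 4 statements merged into one kernel-verified Lean document; each statement's English description precedes it below -/
import Mathlib

section
/- For a fixed positive integer n and r variables, the intersection of the ideal (ξ₁ⁿ, ..., ξᵣⁿ) in ℤ[ξ₁,...,ξᵣ] with the subring of symmetric polynomials equals the ideal of the symmetric polynomial ring generated by the monomial symmetric polynomials m_λ(ξ₁,...,ξᵣ) over all partitions λ with largest part λ₁ ≥ n. -/
/-!
A polynomial lies in `(ξ₁ⁿ, …, ξᵣⁿ)` iff every monomial of its support has an exponent `≥ n`,
i.e. iff the partition formed by the nonzero exponents of every such monomial has a part `≥ n`.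
The coefficients of a symmetric polynomial only depend on that partition, and `m_λ` is the
indicator of the monomials whose partition is `λ`. Hence subtracting `c • m_λ`, for `ξ^d` in the
support of a symmetric `f` with coefficient `c` and partition `λ`, shrinks the support, and
induction on the support writes `f` as a combination of the `m_λ` over the partitions `λ`
occurring in `f`. Both inclusions follow.
-/

open MvPolynomial Finset

theorem Fintype.exists_equiv_eq_comp_of_map_univ_eq {α β : Type*} [Fintype α] [DecidableEq β]
    {f g : α → β} (h : univ.val.map f = univ.val.map g) :
    ∃ e : α ≃ α, f = g ∘ e := by
  have hfiber (b : β) : Fintype.card {a // f a = b} = Fintype.card {a // g a = b} := by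
    have := congrArg (Multiset.count b) h
    simp_rw [Multiset.count_map, @eq_comm _ b] at this
    simpa only [Fintype.card_subtype, card_def, filter_val] using this
  exact ⟨Equiv.ofFiberEquiv fun b => Fintype.equivOfCardEq (hfiber b),
    funext fun a => (Equiv.ofFiberEquiv_map _ a).symm⟩

namespace Finsupp

variable {σ : Type*}

def toPartition (d : σ →₀ ℕ) : (degree d).Partition where
  parts := d.support.val.map d
  parts_pos {a} ha := by
    obtain ⟨i, hi, rfl⟩ := Multiset.mem_map.mp ha
    exact Nat.pos_of_ne_zero (mem_support_iff.mp hi)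
  parts_sum := rfl

theorem toPartition_parts (d : σ →₀ ℕ) : d.toPartition.parts = d.support.val.map d := rfl

theorem mem_toPartition_parts {d : σ →₀ ℕ} {i : σ} (hi : d i ≠ 0) :
    d i ∈ d.toPartition.parts :=
  Multiset.mem_map_of_mem d (mem_support_iff.mpr hi)

theorem map_univ_val_eq_toPartition_parts_add [Fintype σ] (d : σ →₀ ℕ) :
    univ.val.map d =
      d.toPartition.parts + Multiset.replicate (Fintype.card σ - d.support.card) 0 := by
  classical
  have hsupp : d.support = univ.filter (d · ≠ 0) := by ext; simp
  rw [← Multiset.filter_add_not (d · ≠ 0) univ.val, Multiset.map_add, toPartition_parts, hsupp,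
    filter_val]
  congr 1
  rw [Multiset.eq_replicate]
  constructor
  · have := card_filter_add_card_filter_not (s := (univ : Finset σ)) (d · ≠ 0)
    rw [card_univ] at this
    rw [Multiset.card_map, ← filter_val, ← card_def]
    omega
  · simp +contextual

theorem exists_equiv_of_toPartition_parts_eq [Fintype σ] {d e : σ →₀ ℕ}
    (h : d.toPartition.parts = e.toPartition.parts) :
    ∃ π : σ ≃ σ, e = d.equivMapDomain π := by
  classical
  have hcard : d.support.card = e.support.card := by
    simpa [toPartition_parts] using congrArg Multiset.card h
  obtain ⟨π, hπ⟩ := Fintype.exists_equiv_eq_comp_of_map_univ_eq (f := ⇑d) (g := ⇑e) (by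
    rw [map_univ_val_eq_toPartition_parts_add, map_univ_val_eq_toPartition_parts_add, h, hcard])
  exact ⟨π, ext fun i => by simp [hπ]⟩

theorem toPartition_toFinsupp_parts [DecidableEq σ] {N : ℕ} (s : Sym σ N) :
    (Multiset.toFinsupp (s : Multiset σ)).toPartition.parts = (Nat.Partition.ofSym s).parts := by
  show _ = Multiset.map _ (Multiset.dedup _)
  rw [toPartition_parts, Multiset.toFinsupp_support, Multiset.toFinset_val]
  exact Multiset.map_congr rfl fun a _ => Multiset.toFinsupp_apply _ _

end Finsupp

namespace MvPolynomial

variable {σ R : Type*}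

theorem IsSymmetric.coeff_eq_of_toPartition_parts_eq [CommSemiring R] [Fintype σ]
    {f : MvPolynomial σ R} (hf : f.IsSymmetric) {d e : σ →₀ ℕ}
    (h : d.toPartition.parts = e.toPartition.parts) : coeff d f = coeff e f := by
  obtain ⟨π, rfl⟩ := Finsupp.exists_equiv_of_toPartition_parts_eq h
  rw [Finsupp.equivMapDomain_eq_mapDomain, ← coeff_rename_mapDomain π π.injective, hf]

theorem prod_map_X_eq_monomial [CommSemiring R] [DecidableEq σ] (m : Multiset σ) :
    (m.map (X : σ → MvPolynomial σ R)).prod = monomial (Multiset.toFinsupp m) 1 := by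
  induction m using Multiset.induction with
  | empty => simp
  | cons a m ih =>
    rw [Multiset.map_cons, Multiset.prod_cons, ih, ← Multiset.singleton_add,
      Multiset.toFinsupp_add, Multiset.toFinsupp_singleton, X, monomial_mul, one_mul]

theorem coeff_msymm [CommSemiring R] [Fintype σ] [DecidableEq σ] {N : ℕ} (μ : N.Partition)
    (d : σ →₀ ℕ) :
    coeff d (msymm σ R μ) = if d.toPartition.parts = μ.parts then 1 else 0 := by
  simp only [msymm, coeff_sum, prod_map_X_eq_monomial, coeff_monomial, Multiset.toFinsupp_eq_iff]
  split_ifs with h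
  · have hN : Multiset.card (Finsupp.toMultiset d) = N := by
      rw [Finsupp.card_toMultiset, ← μ.parts_sum, ← h, d.toPartition.parts_sum]
      rfl
    have hμ : Nat.Partition.ofSym (Sym.mk _ hN) = μ := by
      ext1
      rw [← Finsupp.toPartition_toFinsupp_parts, ← h, Sym.coe_mk, Finsupp.toMultiset_toFinsupp]
    rw [Fintype.sum_eq_single ⟨Sym.mk _ hN, hμ⟩
      fun s hs => if_neg fun h' => hs (by ext1; ext1; exact h')]
    exact if_pos rfl
  · refine Finset.sum_eq_zero fun s _ => if_neg fun hs => h ?_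
    rw [← s.2, ← Finsupp.toPartition_toFinsupp_parts, show (s.1 : Multiset σ) = _ from hs,
      Finsupp.toMultiset_toFinsupp]

theorem IsSymmetric.support_sub_C_mul_msymm_subset [CommRing R] [Fintype σ] [DecidableEq σ]
    {f : MvPolynomial σ R} (hf : f.IsSymmetric) (d : σ →₀ ℕ) :
    (f - MvPolynomial.C (coeff d f) * msymm σ R d.toPartition).support ⊆ f.support.erase d := by
  intro e he
  rw [mem_support_iff, coeff_sub, coeff_C_mul, coeff_msymm] at he
  split_ifs at he with hde
  · rw [hf.coeff_eq_of_toPartition_parts_eq hde, mul_one, sub_self] at he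
    exact absurd rfl he
  · rw [mul_zero, sub_zero] at he
    exact mem_erase.mpr ⟨by rintro rfl; exact hde rfl, mem_support_iff.mpr he⟩

theorem msymm_mem_symmetricSubalgebra [CommSemiring R] [Fintype σ] [DecidableEq σ] {N : ℕ}
    (μ : N.Partition) : msymm σ R μ ∈ symmetricSubalgebra σ R :=
  msymm_isSymmetric σ R μ

theorem mem_of_forall_msymm_mem [CommRing R] [Fintype σ] [DecidableEq σ]
    (I : Ideal (symmetricSubalgebra σ R)) {f : MvPolynomial σ R}
    (hf : f ∈ symmetricSubalgebra σ R)
    (h : ∀ d ∈ f.support, ⟨_, msymm_mem_symmetricSubalgebra d.toPartition⟩ ∈ I) :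
    ⟨f, hf⟩ ∈ I := by
  induction hs : f.support using Finset.strongInduction generalizing f with
  | H s ih =>
    subst hs
    obtain h0 | ⟨d, hd⟩ := f.support.eq_empty_or_nonempty
    · convert I.zero_mem
      exact support_eq_empty.mp h0
    set g := f - C (coeff d f) * msymm σ R d.toPartition
    have hg : g ∈ symmetricSubalgebra σ R :=
      sub_mem hf (mul_mem (algebraMap_mem _ _) (msymm_mem_symmetricSubalgebra _))
    have hgsupp := IsSymmetric.support_sub_C_mul_msymm_subset hf d
    have hgI : ⟨g, hg⟩ ∈ I := ih _ (hgsupp.trans_ssubset (erase_ssubset hd)) hg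
      (fun e he => h e (mem_of_mem_erase (hgsupp he))) rfl
    have hfg : (⟨f, hf⟩ : symmetricSubalgebra σ R) =
        ⟨g, hg⟩ + algebraMap R _ (coeff d f) * ⟨_, msymm_mem_symmetricSubalgebra d.toPartition⟩ :=
      Subtype.ext (by simp [g])
    rw [hfg]
    exact add_mem hgI (I.mul_mem_left _ (h d hd))

theorem mem_ideal_span_X_pow_iff [CommSemiring R] {n : ℕ} {f : MvPolynomial σ R} :
    f ∈ Ideal.span (Set.range fun i => X i ^ n) ↔ ∀ d ∈ f.support, ∃ i, n ≤ d i := by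
  have : Set.range (fun i => (X i ^ n : MvPolynomial σ R)) =
      (fun s => monomial s 1) '' Set.range fun i => Finsupp.single i n := by
    ext
    simp [X_pow_eq_monomial]
  simp [this, mem_ideal_span_monomial_image, Finsupp.single_le_iff]

end MvPolynomial

open MvPolynomial

/-- For fixed `n > 0`, the intersection of the ideal `(ξ₁ⁿ, …, ξᵣⁿ)` of `ℤ[ξ₁,…,ξᵣ]`
with the subring of symmetric polynomials equals the ideal of the symmetric polynomial
ring generated by the monomial symmetric polynomials `m_λ` over partitions `λ` with
largest part `≥ n`. -/
theorem stmt0 (n r : ℕ) (hn : 0 < n) :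
    Ideal.comap (symmetricSubalgebra (Fin r) ℤ).val.toRingHom
        (Ideal.span {f : MvPolynomial (Fin r) ℤ | ∃ i : Fin r, f = X i ^ n}) =
      Ideal.span {p : symmetricSubalgebra (Fin r) ℤ |
        ∃ (N : ℕ) (μ : N.Partition), (∃ a ∈ μ.parts, n ≤ a) ∧
          (p : MvPolynomial (Fin r) ℤ) = msymm (Fin r) ℤ μ} := by
  have hgens : {f : MvPolynomial (Fin r) ℤ | ∃ i : Fin r, f = X i ^ n} =
      Set.range fun i => X i ^ n := by
    ext
    simp [eq_comm]
  apply le_antisymm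
  · intro x hx
    rw [Ideal.mem_comap, hgens] at hx
    refine mem_of_forall_msymm_mem _ x.2 fun d hd => Ideal.subset_span ⟨_, d.toPartition, ?_, rfl⟩
    obtain ⟨i, hi⟩ := mem_ideal_span_X_pow_iff.mp hx d hd
    exact ⟨d i, Finsupp.mem_toPartition_parts (by omega), hi⟩
  · rw [Ideal.span_le]
    rintro p ⟨N, μ, ⟨a, ha, hna⟩, hp⟩
    rw [SetLike.mem_coe, Ideal.mem_comap, hgens, mem_ideal_span_X_pow_iff]
    intro d hd
    have hdμ : d.toPartition.parts = μ.parts := by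
      by_contra hne
      exact mem_support_iff.mp hd (by simp [hp, coeff_msymm, hne])
    obtain ⟨i, -, rfl⟩ := Multiset.mem_map.mp (hdμ ▸ ha)
    exact ⟨i, hna⟩
end

section
/- With notation as follows, for every k ≥ n the identity p̃_k(h|y) = Σ_{i=0}^{k-1} binom(k-n, i) y₀^i p_{k-i}(c|y) holds in Λ[y₁,...,yₙ]. -/
/-!
Write `g = t/(1 - y₀t)` and `u = 1 - y₀t`, so that `H = C ∘ g`, `g' = u⁻²` and
`u · (1 + y g) = 1 + (y - y₀)t`. The chain rule turns `C'/C = P` into `P̃ = (P ∘ g) · g'`, and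
`Ẽ = uⁿ · (E ∘ g)`, hence `P̃ Ẽ = uⁿ g' · ((P E) ∘ g)`. As `gᵃ = tᵃ u⁻ᵃ`, the coefficient of
`t^(k-1)` in `uⁿ g' gᵃ` is that of `t^(k-1-a)` in `u^(n-a-2)`: for `n ≤ a + 1` a generalized
geometric series with coefficient `binom(k-n, k-1-a) y₀^(k-1-a)`, otherwise a polynomial of degree
too small, matching `binom(k-n, k-1-a) = 0`.
-/

/-- Substitution of a power series `g` with zero constant term into `F`. -/
noncomputable def substS {R : Type*} [CommRing R] (g F : PowerSeries R) : PowerSeries R :=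
  PowerSeries.mk fun n =>
    ∑ k ∈ Finset.range (n + 1), PowerSeries.coeff k F * PowerSeries.coeff n (g ^ k)

/-- The ring `Λ[y₁,…,yₙ]`: `X (inl k)` is `c_k` (`k ≥ 1`), `X (inr i)` is `y_{i+1}`. -/
abbrev Lam (n : ℕ) := MvPolynomial (ℕ ⊕ Fin n) ℤ

noncomputable def cL (n : ℕ) : ℕ → Lam n :=
  fun k => if k = 0 then 1 else MvPolynomial.X (.inl k)

noncomputable def yL (n : ℕ) : Fin n → Lam n := fun i => MvPolynomial.X (.inr i)

/-- `y₀ = yₙ`. -/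
noncomputable def y0L (n : ℕ) : Lam n :=
  if h : 0 < n then yL n ⟨n - 1, Nat.sub_lt h one_pos⟩ else 0

/-- `C(t) = Σ c_k t^k`. -/
noncomputable def CL (n : ℕ) : PowerSeries (Lam n) := PowerSeries.mk (cL n)

/-- `t/(1 - y₀t)`. -/
noncomputable def gL (n : ℕ) : PowerSeries (Lam n) :=
  PowerSeries.mk fun m => if m = 0 then 0 else y0L n ^ (m - 1)

/-- `H(t) = C(t/(1-y₀t))`. -/
noncomputable def HL (n : ℕ) : PowerSeries (Lam n) := substS (gL n) (CL n)

/-- `E(t) = Π_{i=1}^n (1 + y_i t)`. -/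
noncomputable def EL (n : ℕ) : PowerSeries (Lam n) :=
  ∏ i : Fin n, (1 + PowerSeries.C (yL n i) * PowerSeries.X)

/-- `Ẽ(t) = Π_{i=1}^n (1 + (y_i - y₀) t)`. -/
noncomputable def EtL (n : ℕ) : PowerSeries (Lam n) :=
  ∏ i : Fin n, (1 + PowerSeries.C (yL n i - y0L n) * PowerSeries.X)


open PowerSeries Finset

section Substitution
variable {R : Type*} [CommRing R] {g : R⟦X⟧}

lemma coeff_pow_eq_zero_of_constantCoeff_eq_zero (hg : constantCoeff g = 0) {j a : ℕ}
    (h : j < a) : coeff j (g ^ a) = 0 := by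
  obtain ⟨q, rfl⟩ := X_dvd_iff.mpr hg
  rw [mul_pow, coeff_X_pow_mul', if_neg (by omega)]

lemma constantCoeff_substS (g F : R⟦X⟧) : constantCoeff (substS g F) = constantCoeff F := by
  rw [← coeff_zero_eq_constantCoeff_apply, ← coeff_zero_eq_constantCoeff_apply, substS, coeff_mk]
  simp

lemma coeff_substS_eq_sum_range (hg : constantCoeff g = 0) (F : R⟦X⟧) {m N : ℕ} (h : m < N) :
    coeff m (substS g F) = ∑ a ∈ range N, coeff a F * coeff m (g ^ a) := by
  rw [substS, coeff_mk]
  refine sum_subset (range_subset_range.2 (by omega)) fun a _ ha => ?_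
  rw [coeff_pow_eq_zero_of_constantCoeff_eq_zero hg (by simp at ha; omega), mul_zero]

theorem substS_eq_subst (hg : constantCoeff g = 0) (F : R⟦X⟧) : substS g F = F.subst g := by
  ext m
  rw [coeff_subst' (.of_constantCoeff_zero' hg), coeff_substS_eq_sum_range hg F m.lt_succ_self,
    finsum_eq_sum_of_support_subset (s := range (m + 1))]
  · rfl
  · intro a ha
    contrapose! ha
    simp only [Function.mem_support, coe_range, Set.mem_Iio, not_lt, not_not] at ha ⊢
    rw [coeff_pow_eq_zero_of_constantCoeff_eq_zero hg (by omega), smul_zero]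

lemma coeff_mul_subst (hg : constantCoeff g = 0) (W F : R⟦X⟧) (m : ℕ) :
    coeff m (W * F.subst g) = ∑ a ∈ range (m + 1), coeff a F * coeff m (W * g ^ a) := by
  rw [← substS_eq_subst hg, coeff_mul]
  simp only [coeff_mul m W, mul_sum]
  rw [sum_comm]
  refine sum_congr rfl fun x hx => ?_
  rw [Finset.HasAntidiagonal.mem_antidiagonal] at hx
  rw [coeff_substS_eq_sum_range hg F (N := m + 1) (by omega), mul_sum]
  exact sum_congr rfl fun a _ => by ring

theorem logDeriv_subst {F P Q : R⟦X⟧} (hg : HasSubst g) (hF : P * F = d⁄dX R F)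
    (hQ : Q * F.subst g = d⁄dX R (F.subst g)) (hunit : IsUnit (F.subst g)) :
    Q = P.subst g * d⁄dX R g :=
  hunit.mul_right_cancel <| by
    rw [hQ, derivative_subst hg, ← hF, subst_mul hg]
    ring

end Substitution

section Moebius
variable {R : Type*} [CommRing R] (a : R)

lemma invOneSubPow_one_pow (d : ℕ) : invOneSubPow R 1 ^ d = invOneSubPow R d := by
  simp only [invOneSubPow_eq_inv_one_sub_pow, ← pow_mul, one_mul]

/-- The unit `1/(1 - aX)`; `moebiusX a = X/(1 - aX)` is the substitution `t ↦ t/(1 - y₀t)`. -/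
noncomputable def geomUnit : R⟦X⟧ˣ := Units.map (rescale a : R⟦X⟧ →* R⟦X⟧) (invOneSubPow R 1)

noncomputable def moebiusX : R⟦X⟧ := X * (geomUnit a : R⟦X⟧)

lemma val_geomUnit_pow (d : ℕ) :
    ((geomUnit a ^ d : R⟦X⟧ˣ) : R⟦X⟧) = rescale a (invOneSubPow R d : R⟦X⟧) := by
  rw [geomUnit, ← map_pow, invOneSubPow_one_pow]
  rfl

lemma val_geomUnit_inv_pow (d : ℕ) :
    (((geomUnit a)⁻¹ ^ d : R⟦X⟧ˣ) : R⟦X⟧) = rescale a ((1 - X) ^ d) := by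
  rw [geomUnit, ← map_inv, ← map_pow, inv_pow, invOneSubPow_one_pow]
  exact congrArg (rescale a) (invOneSubPow_inv_eq_one_sub_pow R d)

lemma val_geomUnit_inv : (((geomUnit a)⁻¹ : R⟦X⟧ˣ) : R⟦X⟧) = 1 - C a * X := by
  simpa using val_geomUnit_inv_pow a 1

lemma coeff_geomUnit_pow (d j : ℕ) :
    coeff j ((geomUnit a ^ (d + 1) : R⟦X⟧ˣ) : R⟦X⟧) = (d + j).choose d * a ^ j := by
  rw [val_geomUnit_pow, coeff_rescale, invOneSubPow_val_succ_eq_mk_add_choose, coeff_mk, mul_comm]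

lemma coeff_geomUnit_inv_pow_of_lt {d j : ℕ} (h : d < j) :
    coeff j (((geomUnit a)⁻¹ ^ d : R⟦X⟧ˣ) : R⟦X⟧) = 0 := by
  have hpoly : ((1 - X : R⟦X⟧) ^ d) = ((1 - Polynomial.X : Polynomial R) ^ d : Polynomial R) := by
    simp
  rw [val_geomUnit_inv_pow, coeff_rescale, hpoly, Polynomial.coeff_coe,
    Polynomial.coeff_eq_zero_of_natDegree_lt, mul_zero]
  exact (Polynomial.natDegree_pow_le_of_le d (by compute_degree!)).trans_lt (by simpa using h)

lemma coeff_moebiusX (m : ℕ) : coeff m (moebiusX a) = if m = 0 then 0 else a ^ (m - 1) := by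
  rcases m with _ | m
  · simp [moebiusX]
  · simpa [moebiusX, coeff_succ_X_mul] using coeff_geomUnit_pow a 0 m

lemma constantCoeff_moebiusX : constantCoeff (moebiusX a) = 0 := by
  simp [moebiusX]

lemma derivative_moebiusX : d⁄dX R (moebiusX a) = ((geomUnit a ^ 2 : R⟦X⟧ˣ) : R⟦X⟧) := by
  have hU : d⁄dX R (geomUnit a) = (geomUnit a : R⟦X⟧) ^ 2 * C a := by
    simpa [val_geomUnit_inv] using derivative_inv (geomUnit a)⁻¹
  have hUinv := Units.mul_inv (geomUnit a)
  rw [val_geomUnit_inv] at hUinv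
  rw [moebiusX, Derivation.leibniz, hU, derivative_X, smul_eq_mul, smul_eq_mul,
    Units.val_pow_eq_pow_val]
  linear_combination (-(geomUnit a : R⟦X⟧)) * hUinv

lemma one_sub_mul_subst_moebiusX (y : R) :
    (1 - C a * X) * (1 + C y * X).subst (moebiusX a) = 1 + C (y - a) * X := by
  have hg := HasSubst.of_constantCoeff_zero' (constantCoeff_moebiusX a)
  have hUinv := Units.mul_inv (geomUnit a)
  rw [val_geomUnit_inv] at hUinv
  rw [← coe_substAlgHom hg, map_add, map_one, ← smul_eq_C_mul X y, map_smul, substAlgHom_X,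
    moebiusX, smul_eq_C_mul, map_sub]
  linear_combination (C y * X) * hUinv

lemma coeff_one_sub_pow_mul_derivative_moebiusX_mul_pow {n j b : ℕ} (hn : n ≤ j + 1)
    (hb : b ≤ j) :
    coeff j ((1 - C a * X) ^ n * d⁄dX R (moebiusX a) * moebiusX a ^ b) =
      ((j + 1 - n).choose (j - b) : R) * a ^ (j - b) := by
  have hX : (1 - C a * X) ^ n * d⁄dX R (moebiusX a) * moebiusX a ^ b =
      X ^ b * (((geomUnit a)⁻¹ ^ n * geomUnit a ^ (b + 2) : R⟦X⟧ˣ) : R⟦X⟧) := by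
    rw [derivative_moebiusX, moebiusX, ← val_geomUnit_inv]
    push_cast
    ring
  rw [hX, coeff_X_pow_mul', if_pos hb]
  rcases le_or_gt n (b + 1) with h | h
  · obtain ⟨m, hm⟩ : ∃ m, b + 2 = n + (m + 1) := ⟨b + 1 - n, by omega⟩
    rw [hm, pow_add, inv_pow, inv_mul_cancel_left, coeff_geomUnit_pow, Nat.choose_symm_add,
      show m + (j - b) = j + 1 - n by omega]
  · obtain ⟨m, rfl⟩ : ∃ m, n = b + 2 + m := ⟨n - (b + 2), by omega⟩
    rw [pow_add, mul_right_comm, inv_pow, inv_mul_cancel, one_mul,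
      coeff_geomUnit_inv_pow_of_lt a (by omega), Nat.choose_eq_zero_of_lt (by omega),
      Nat.cast_zero, zero_mul]

theorem coeff_one_sub_pow_mul_derivative_moebiusX_mul_subst (F : R⟦X⟧) {n j : ℕ}
    (hn : n ≤ j + 1) :
    coeff j ((1 - C a * X) ^ n * d⁄dX R (moebiusX a) * F.subst (moebiusX a)) =
      ∑ i ∈ range (j + 1), ((j + 1 - n).choose i : R) * a ^ i * coeff (j - i) F := by
  rw [coeff_mul_subst (constantCoeff_moebiusX a), ← sum_range_reflect]
  refine sum_congr rfl fun i hi => ?_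
  rw [mem_range] at hi
  rw [coeff_one_sub_pow_mul_derivative_moebiusX_mul_pow a hn (by omega),
    show j + 1 - 1 - i = j - i by omega, show j - (j - i) = i by omega]
  ring

end Moebius

lemma HL_eq_subst (n : ℕ) : HL n = (CL n).subst (moebiusX (y0L n)) := by
  rw [HL, ← substS_eq_subst (constantCoeff_moebiusX _)]
  congr 1
  ext m
  rw [gL, coeff_mk, coeff_moebiusX]

lemma isUnit_HL (n : ℕ) : IsUnit (HL n) := by
  rw [isUnit_iff_constantCoeff, HL, constantCoeff_substS, ← coeff_zero_eq_constantCoeff_apply]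
  simp [CL, cL]

lemma EtL_eq_one_sub_pow_mul_subst (n : ℕ) :
    EtL n = (1 - C (y0L n) * X) ^ n * (EL n).subst (moebiusX (y0L n)) := by
  rw [EtL, EL, ← coe_substAlgHom (.of_constantCoeff_zero' (constantCoeff_moebiusX _)), map_prod,
    ← Fin.prod_const, ← prod_mul_distrib]
  refine prod_congr rfl fun i _ => ?_
  rw [coe_substAlgHom, one_sub_mul_subst_moebiusX]

/-- For `k ≥ n`: `p̃_k(h|y) = Σ_{i=0}^{k-1} binom(k-n,i) y₀^i p_{k-i}(c|y)`, where
`Σ p_k t^{k-1} = C'/C`, `Σ p̃_k t^{k-1} = H'/H`, `Σ p_k(c|y) t^{k-1} = (C'/C)·E`,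
`Σ p̃_k(h|y) t^{k-1} = (H'/H)·Ẽ`. -/
theorem stmt6 (n : ℕ) (hn : 0 < n) (p pt pcy phy : ℕ → Lam n)
    (hp : (PowerSeries.mk fun j => p (j + 1)) * CL n = (CL n).derivativeFun)
    (hpt : (PowerSeries.mk fun j => pt (j + 1)) * HL n = (HL n).derivativeFun)
    (hpcy : (PowerSeries.mk fun j => pcy (j + 1)) =
      (PowerSeries.mk fun j => p (j + 1)) * EL n)
    (hphy : (PowerSeries.mk fun j => phy (j + 1)) =
      (PowerSeries.mk fun j => pt (j + 1)) * EtL n)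
    (k : ℕ) (hk : n ≤ k) :
    phy k = ∑ i ∈ Finset.range k, ((k - n).choose i : Lam n) * y0L n ^ i * pcy (k - i) := by
  have hg : HasSubst (moebiusX (y0L n)) := .of_constantCoeff_zero' (constantCoeff_moebiusX _)
  have hpt' := logDeriv_subst hg hp (HL_eq_subst n ▸ hpt) (HL_eq_subst n ▸ isUnit_HL n)
  have hphy' : (mk fun j => phy (j + 1)) = (1 - C (y0L n) * X) ^ n *
      d⁄dX _ (moebiusX (y0L n)) * (mk fun j => pcy (j + 1)).subst (moebiusX (y0L n)) := by
    rw [hphy, hpt', EtL_eq_one_sub_pow_mul_subst, hpcy, subst_mul hg]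
    ring
  obtain ⟨j, rfl⟩ : ∃ j, k = j + 1 := ⟨k - 1, by omega⟩
  have hcoeff := congrArg (coeff j) hphy'
  rw [coeff_mk, coeff_one_sub_pow_mul_derivative_moebiusX_mul_subst _ _ hk] at hcoeff
  rw [hcoeff]
  refine sum_congr rfl fun i hi => ?_
  rw [coeff_mk, show j - i + 1 = j + 1 - i by grind]
end

section
/- In the chain of rings ℤ[y] ⊆ Λ[y] where Λ = ℤ[c₁,c₂,...] and y = (y₁,...,yₙ): the ℤ[y]-algebra automorphism of Λ[y] sending p_k(c) to p_k(c) - (-1)^k p_k(y), where p_k(y) = y₁ᵏ + ··· + yₙᵏ, maps p_k(c|y) to p_k(c|y) + k·e_k(y₁,...,yₙ) for every k ≥ 1. -/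
/-- `e_j(y₁,…,yₙ)` (zero for `j > n`). -/
noncomputable def esyL (n j : ℕ) : Lam n :=
  ∑ S ∈ (Finset.univ : Finset (Fin n)).powersetCard j, ∏ i ∈ S, yL n i

theorem Finset.Nat.sum_antidiagonal_filter_fst_lt {M : Type*} [AddCommMonoid M]
    (k : ℕ) (f : ℕ × ℕ → M) :
    ∑ a ∈ antidiagonal k with a.1 < k, f a = ∑ i ∈ Finset.Icc 1 k, f (k - i, i) := by
  apply Finset.sum_nbij' Prod.snd (fun i => (k - i, i)) <;> intro a <;>
    grind [Finset.HasAntidiagonal.mem_antidiagonal]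

open Finset

namespace MvPolynomial

theorem sum_Icc_neg_one_pow_mul_psum_mul_esymm (σ R : Type*) [Fintype σ] [CommRing R] (k : ℕ) :
    ∑ i ∈ Icc 1 k, (-1 : MvPolynomial σ R) ^ i * psum σ R i * esymm σ R (k - i) =
      -k * esymm σ R k := by
  rw [neg_mul, mul_esymm_eq_sum, Nat.sum_antidiagonal_filter_fst_lt, mul_sum,
    ← sum_neg_distrib]
  refine sum_congr rfl fun i hi => ?_
  obtain ⟨m, rfl⟩ := Nat.exists_eq_add_of_le (mem_Icc.mp hi).2
  have hsign : (-1 : MvPolynomial σ R) ^ (i + m + 1) * (-1) ^ m = -(-1) ^ i := by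
    rw [← pow_add, show i + m + 1 + m = i + 1 + 2 * m by ring, pow_add, pow_mul, pow_succ]
    simp
  rw [Nat.add_sub_cancel_left]
  linear_combination (psum σ R i * esymm σ R m) * hsign

end MvPolynomial

open MvPolynomial

theorem rename_inr_esymm (n j : ℕ) :
    rename (Sum.inr : Fin n → ℕ ⊕ Fin n) (esymm (Fin n) ℤ j) = esyL n j := by
  simp [esymm, esyL, yL]

theorem rename_inr_psum (n i : ℕ) :
    rename (Sum.inr : Fin n → ℕ ⊕ Fin n) (psum (Fin n) ℤ i) = ∑ j : Fin n, yL n j ^ i := by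
  simp [psum, yL]

theorem sum_Icc_neg_one_pow_mul_psum_yL_mul_esyL (n k : ℕ) :
    ∑ i ∈ Icc 1 k, (-1 : Lam n) ^ i * (∑ j : Fin n, yL n j ^ i) * esyL n (k - i) =
      -(k : Lam n) * esyL n k := by
  have h := congrArg (rename (Sum.inr : Fin n → ℕ ⊕ Fin n))
    (sum_Icc_neg_one_pow_mul_psum_mul_esymm (Fin n) ℤ k)
  simpa only [map_sum, map_mul, map_neg, map_pow, map_one, map_natCast, rename_inr_esymm,
    rename_inr_psum] using h

theorem map_esyL_of_forall_map_yL {n : ℕ} {F : Type*} [FunLike F (Lam n) (Lam n)]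
    [RingHomClass F (Lam n) (Lam n)] (φ : F) (hφy : ∀ i, φ (yL n i) = yL n i) (j : ℕ) :
    φ (esyL n j) = esyL n j := by
  simp only [esyL, map_sum, map_prod, hφy]

theorem stmt11_general (n : ℕ) (p pcy : ℕ → Lam n)
    (hpcy : ∀ k, pcy k = ∑ i ∈ Finset.Icc 1 k, p i * esyL n (k - i))
    (φ : Lam n ≃ₐ[ℤ] Lam n)
    (hφy : ∀ i, φ (yL n i) = yL n i)
    (hφp : ∀ k, 1 ≤ k → φ (p k) = p k - (-1) ^ k * ∑ i : Fin n, yL n i ^ k)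
    (k : ℕ) :
    φ (pcy k) = pcy k + (k : Lam n) * esyL n k := by
  have hterm : ∀ i ∈ Icc 1 k, φ (p i * esyL n (k - i)) =
      p i * esyL n (k - i) - (-1) ^ i * (∑ j : Fin n, yL n j ^ i) * esyL n (k - i) := by
    intro i hi
    rw [map_mul, hφp i (mem_Icc.mp hi).1, map_esyL_of_forall_map_yL φ hφy]
    ring
  rw [hpcy k, map_sum, sum_congr rfl hterm, sum_sub_distrib,
    sum_Icc_neg_one_pow_mul_psum_yL_mul_esyL]
  ring

/-- Any `ℤ[y]`-algebra automorphism `φ` of `Λ[y]` sending `p_k(c) ↦ p_k(c) - (-1)^k p_k(y)`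
maps `p_k(c|y) = Σ_{i=1}^k p_i(c) e_{k-i}(y)` to `p_k(c|y) + k·e_k(y)`, for all `k ≥ 1`. -/
theorem stmt11 (n : ℕ) (hn : 0 < n) (p pcy : ℕ → Lam n)
    (hp : (PowerSeries.mk fun j => p (j + 1)) * PowerSeries.mk (cL n) =
      (PowerSeries.mk (cL n)).derivativeFun)
    (hpcy : ∀ k, pcy k = ∑ i ∈ Finset.Icc 1 k, p i * esyL n (k - i))
    (φ : Lam n ≃ₐ[ℤ] Lam n)
    (hφy : ∀ i, φ (yL n i) = yL n i)
    (hφp : ∀ k, 1 ≤ k → φ (p k) = p k - (-1) ^ k * ∑ i : Fin n, yL n i ^ k)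
    (k : ℕ) (hk : 1 ≤ k) :
    φ (pcy k) = pcy k + (k : Lam n) * esyL n k :=
  stmt11_general n p pcy hpcy φ hφy hφp k
end

section
/- For a partition λ with r parts, the double monomial symmetric function m_λ(ξ|a) := Σ_{(1^r) ⊆ α ⊆ λ} (n(α)/n(λ)) e_{λ-α}(a) m_α(ξ) has integer coefficients, i.e. lies in Λ_ξ[a₁,a₂,...] with Λ_ξ the ring of symmetric functions over ℤ; equivalently, m_λ(ξ|a) equals the sum of σ((ξ|a)^λ) over all distinct permutations σ of the monomial (ξ|a)^λ = Π_{i=1}^r ξ_i(ξ_i+a₁)···(ξ_i+a_{λ_i-1}) (where σ permutes the ξ variables). -/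
open Equiv

/-- `ℤ[ξ₁,…,ξ_N, a₁,a₂,…]`: `X (inl i)` is `ξ_{i+1}`, `X (inr m)` is `a_m` (`m ≥ 1`). -/
abbrev XiA (N : ℕ) := MvPolynomial (Fin N ⊕ ℕ) ℤ

/-- The same ring with `ℚ` coefficients. -/
abbrev XiAQ (N : ℕ) := MvPolynomial (Fin N ⊕ ℕ) ℚ

/-- `a₀ := 0`, `a_m` for `m ≥ 1` (so that `ξ(ξ+a₁)⋯(ξ+a_{k-1}) = Π_{m<k}(ξ + a_m)`). -/
noncomputable def aV0 (N : ℕ) : ℕ → XiA N :=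
  fun m => if m = 0 then 0 else MvPolynomial.X (.inr m)

/-- For an exponent vector `μ`, the product `Π_j Π_{m<μ_j} (ξ_j + a_m)`, i.e. the
"monomial" `(ξ|a)^μ`. -/
noncomputable def xiaMonomial (N : ℕ) (μ : Fin N → ℕ) : XiA N :=
  ∏ j : Fin N, ∏ m ∈ Finset.range (μ j), (MvPolynomial.X (.inl j) + aV0 N m)

/-- `e_j(a₁,…,a_m)` with `ℚ` coefficients. -/
noncomputable def esymAQ (N m j : ℕ) : XiAQ N :=
  ∑ S ∈ (Finset.Icc 1 m).powersetCard j, ∏ t ∈ S, MvPolynomial.X (.inr t)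

/-- The monomial symmetric function `m_α(ξ)` (in `N` variables, `ℚ` coefficients):
the sum of the distinct permutations of the monomial `ξ^α` (extended by zeros). -/
noncomputable def msymQ (N r : ℕ) (hr : r ≤ N) (α : Fin r → ℕ) : XiAQ N :=
  ∑ μ ∈ Finset.image
      (fun σ : Perm (Fin N) =>
        (fun j : Fin N => if h : (j : ℕ) < r then α ⟨j, h⟩ else 0) ∘ σ)
      Finset.univ,
    ∏ j : Fin N, MvPolynomial.X (Sum.inl j : Fin N ⊕ ℕ) ^ μ j

/-- `n(α) = Π_v (number of occurrences of v in α)!`. -/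
noncomputable def nperm (r : ℕ) (α : Fin r → ℕ) : ℕ :=
  ∏ v ∈ Finset.image α Finset.univ,
    (Finset.univ.filter fun i => α i = v).card.factorial

/-!
Multiply both sides by `n(λ) (N - r)!`, the order of the stabilizer in `S_N` of `λ` padded by
zeros. The right-hand side becomes `Σ_{σ ∈ S_N} σ((ξ|a)^λ)`, and likewise
`n(α) (N - r)! m_α(ξ) = Σ_{σ ∈ S_N} σ(ξ^α)`. Expanding each factor as
`ξ (ξ + a₁) ⋯ (ξ + a_{k-1}) = Σ_{t=1}^{k} e_{k-t}(a₁, …, a_{k-1}) ξ^t` gives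
`(ξ|a)^λ = Σ_{(1^r) ⊆ α ⊆ λ} e_{λ-α}(a) ξ^α`; the coefficients do not involve `ξ`, so applying
`σ` and summing over `S_N` yields the identity.
-/

open MvPolynomial Finset

section Perm

variable {ι κ M : Type*} [Fintype ι] [DecidableEq ι] [DecidableEq κ]

lemma card_filter_comp_perm_eq (f : ι → κ) (σ₀ : Perm ι) :
    #{σ : Perm ι | f ∘ σ = f ∘ σ₀} = #{σ : Perm ι | f ∘ σ = f} := by
  refine card_nbij' (· * σ₀⁻¹) (· * σ₀) ?_ ?_ ?_ ?_ <;> intro σ hσ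
  · simp only [coe_filter, Set.mem_ofPred_eq, mem_univ, true_and, Perm.coe_mul] at hσ ⊢
    rw [← Function.comp_assoc, hσ, Function.comp_assoc]
    simp
  · simp only [coe_filter, Set.mem_ofPred_eq, mem_univ, true_and, Perm.coe_mul] at hσ ⊢
    rw [← Function.comp_assoc, hσ]
  · simp
  · simp

lemma sum_comp_perm_eq_card_smul [AddCommMonoid M] (f : ι → κ) (g : (ι → κ) → M) :
    ∑ σ : Perm ι, g (f ∘ σ) =
      #{σ : Perm ι | f ∘ σ = f} • ∑ μ ∈ univ.image fun σ : Perm ι => f ∘ σ, g μ := by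
  rw [Finset.sum_comp, smul_sum]
  refine sum_congr rfl fun μ hμ => ?_
  obtain ⟨σ₀, -, rfl⟩ := mem_image.1 hμ
  rw [card_filter_comp_perm_eq]

lemma card_filter_comp_perm_eq_prod (f : ι → κ) {S : Finset κ} (hS : ∀ i, f i ∈ S) :
    #{σ : Perm ι | f ∘ σ = f} = ∏ v ∈ S, (#{i | f i = v}).factorial := by
  rw [← Fintype.card_subtype, DomMulAct.stabilizer_card']
  simp only [Fintype.card_subtype]
  refine prod_subset (fun v hv => ?_) fun v _ hv => ?_
  · obtain ⟨i, -, rfl⟩ := mem_image.1 hv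
    exact hS i
  rw [filter_false_of_mem (by simpa using hv), card_empty, Nat.factorial_zero]

end Perm

-- Definitionally the zero extension occurring in `msymQ` and in `stmt16`.
def padZero {r : ℕ} (N : ℕ) (α : Fin r → ℕ) : Fin N → ℕ :=
  fun j => if h : (j : ℕ) < r then α ⟨j, h⟩ else 0

section PadZero

variable {M : Type*} {N r : ℕ}

@[to_additive]
lemma prod_padZero [CommMonoid M] (hr : r ≤ N) (α : Fin r → ℕ) (F : Fin N → ℕ → M)
    (hF : ∀ j, F j 0 = 1) :
    ∏ j, F j (padZero N α j) = ∏ i, F (Fin.castLE hr i) (α i) := by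
  have hpad : ∀ i, padZero N α (Fin.castLE hr i) = α i := fun i => dif_pos i.2
  calc ∏ j, F j (padZero N α j)
      = ∏ j ∈ univ.map (Fin.castLEEmb hr), F j (padZero N α j) := by
        refine (prod_subset (subset_univ _) fun j _ hj => ?_).symm
        have hjr : ¬ (j : ℕ) < r := fun h => hj (mem_map.2 ⟨⟨j, h⟩, mem_univ _, rfl⟩)
        rw [padZero, dif_neg hjr, hF]
    _ = ∏ i, F (Fin.castLE hr i) (α i) := by
        rw [prod_map]
        exact prod_congr rfl fun i _ => by rw [← hpad]; rfl

lemma card_filter_padZero_eq (hr : r ≤ N) (α : Fin r → ℕ) {v : ℕ} (hv : v ≠ 0) :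
    #{j : Fin N | padZero N α j = v} = #{i : Fin r | α i = v} := by
  simp only [card_filter]
  exact sum_padZero hr α (fun _ k => if k = v then 1 else 0) fun _ => if_neg hv.symm

lemma card_filter_padZero_eq_zero (hr : r ≤ N) (α : Fin r → ℕ) (hα : ∀ i, α i ≠ 0) :
    #{j : Fin N | padZero N α j = 0} = N - r := by
  have hne : #{j : Fin N | ¬ padZero N α j = 0} = r := by
    simp only [card_filter]
    rw [sum_padZero hr α (fun _ k => if ¬ k = 0 then 1 else 0) fun _ => if_neg (by simp)]
    simp [hα]
  have := card_filter_add_card_filter_not (s := univ) (fun j : Fin N => padZero N α j = 0)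
  rw [hne, card_univ, Fintype.card_fin] at this
  omega

lemma card_stabilizer_padZero (hr : r ≤ N) (α : Fin r → ℕ) (hα : ∀ i, α i ≠ 0) :
    #{σ : Perm (Fin N) | padZero N α ∘ σ = padZero N α} = nperm r α * (N - r).factorial := by
  have h0 : 0 ∉ univ.image α := by simpa using hα
  rw [card_filter_comp_perm_eq_prod _ (S := insert 0 (univ.image α)), prod_insert h0,
    card_filter_padZero_eq_zero hr α hα, nperm, mul_comm]
  · congr 1
    refine prod_congr rfl fun v hv => ?_
    rw [card_filter_padZero_eq hr α (ne_of_mem_of_not_mem hv h0)]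
  · intro j
    unfold padZero
    split_ifs <;> simp

end PadZero

lemma prod_add_eq_sum_powersetCard {ι R : Type*} [CommSemiring R] (s : Finset ι) (a : ι → R)
    (x : R) :
    ∏ i ∈ s, (a i + x) =
      ∑ d ∈ range (#s + 1), (∑ S ∈ s.powersetCard d, ∏ i ∈ S, a i) * x ^ (#s - d) := by
  classical
  rw [prod_add, sum_powerset]
  refine sum_congr rfl fun d _ => ?_
  rw [sum_mul]
  refine sum_congr rfl fun S hS => ?_
  rw [mem_powersetCard] at hS
  rw [prod_const, card_sdiff_of_subset hS.1, hS.2]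

lemma rename_prod_X_pow_comp_perm {ι κ R : Type*} [Fintype ι] [CommSemiring R] (ν : ι → ℕ)
    (σ : Perm ι) :
    ∏ j, (X (Sum.inl j) : MvPolynomial (ι ⊕ κ) R) ^ (ν ∘ σ) j =
      rename (Sum.map σ.symm id) (∏ j, X (Sum.inl j) ^ ν j) := by
  simp only [map_prod, map_pow, rename_X, Sum.map_inl]
  conv_rhs => rw [← Equiv.prod_comp σ]
  simp

section XiA

variable {N r : ℕ}

lemma xiaMonomial_comp_perm (μ : Fin N → ℕ) (σ : Perm (Fin N)) :
    xiaMonomial N (μ ∘ σ) = rename (Sum.map σ.symm id) (xiaMonomial N μ) := by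
  simp only [xiaMonomial, aV0, map_prod, map_add, rename_X, Sum.map_inl, apply_ite (rename _),
    map_zero, Sum.map_inr, id]
  conv_rhs => rw [← Equiv.prod_comp σ]
  simp

lemma rename_esymAQ (f : Fin N → Fin N) (m j : ℕ) :
    rename (Sum.map f id) (esymAQ N m j) = esymAQ N m j := by
  simp [esymAQ, map_sum, map_prod]

lemma map_prod_range_X_add_aV0 (j : Fin N) {k : ℕ} (hk : 0 < k) :
    map (Int.castRingHom ℚ) (∏ m ∈ range k, (X (Sum.inl j) + aV0 N m)) =
      ∑ t ∈ Icc 1 k, esymAQ N (k - 1) (k - t) * X (Sum.inl j) ^ t := by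
  obtain ⟨n, rfl⟩ : ∃ n, k = n + 1 := ⟨k - 1, by omega⟩
  have hrange : range (n + 1) = insert 0 (Icc 1 n) := by
    ext m
    simp only [mem_range, mem_insert, mem_Icc]
    omega
  have hIcc : ∀ m ∈ Icc 1 n, map (Int.castRingHom ℚ) (X (Sum.inl j) + aV0 N m) =
      X (Sum.inr m) + X (Sum.inl j) := fun m hm => by
    rw [mem_Icc] at hm
    simp [aV0, show m ≠ 0 by omega, add_comm]
  have hzero : map (Int.castRingHom ℚ) (X (Sum.inl j) + aV0 N 0) = X (Sum.inl j) := by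
    simp [aV0]
  rw [map_prod, hrange, prod_insert (by simp), prod_congr rfl hIcc,
    prod_add_eq_sum_powersetCard, Nat.card_Icc, Nat.add_sub_cancel, hzero, mul_sum]
  refine sum_nbij' (fun d => n + 1 - d) (fun t => n + 1 - t) ?_ ?_ ?_ ?_ ?_ <;>
    simp only [mem_range, mem_Icc]
  any_goals omega
  intro d hd
  rw [show n + 1 - (n + 1 - d) = d by omega, esymAQ, show n + 1 - d = n - d + 1 by omega]
  ring

lemma map_xiaMonomial_padZero (hr : r ≤ N) (lam : Fin r → ℕ) (hpos : ∀ i, 0 < lam i) :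
    map (Int.castRingHom ℚ) (xiaMonomial N (padZero N lam)) =
      ∑ α ∈ Fintype.piFinset fun i => Icc 1 (lam i),
        (∏ i, esymAQ N (lam i - 1) (lam i - α i)) * ∏ j, X (Sum.inl j) ^ padZero N α j := by
  rw [xiaMonomial, prod_padZero hr lam (fun j k => ∏ m ∈ range k, (X (Sum.inl j) + aV0 N m))
    fun _ => prod_range_zero _, map_prod]
  simp_rw [map_prod_range_X_add_aV0 _ (hpos _)]
  rw [prod_univ_sum]
  refine sum_congr rfl fun α _ => ?_
  rw [prod_mul_distrib, prod_padZero hr α (fun j k => X (Sum.inl j) ^ k) fun _ => pow_zero _]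

lemma map_xiaMonomial_padZero_comp_perm (hr : r ≤ N) (lam : Fin r → ℕ) (hpos : ∀ i, 0 < lam i)
    (σ : Perm (Fin N)) :
    map (Int.castRingHom ℚ) (xiaMonomial N (padZero N lam ∘ σ)) =
      ∑ α ∈ Fintype.piFinset fun i => Icc 1 (lam i),
        (∏ i, esymAQ N (lam i - 1) (lam i - α i)) *
          ∏ j, X (Sum.inl j) ^ (padZero N α ∘ σ) j := by
  rw [xiaMonomial_comp_perm, map_rename, map_xiaMonomial_padZero hr lam hpos, map_sum]
  simp only [map_mul, map_prod, rename_esymAQ, rename_prod_X_pow_comp_perm]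

lemma card_smul_msymQ (hr : r ≤ N) (α : Fin r → ℕ) (hα : ∀ i, α i ≠ 0) :
    (nperm r α * (N - r).factorial) • msymQ N r hr α =
      ∑ σ : Perm (Fin N), ∏ j, X (Sum.inl j) ^ (padZero N α ∘ σ) j := by
  rw [← card_stabilizer_padZero hr α hα]
  exact (sum_comp_perm_eq_card_smul (padZero N α) fun μ => ∏ j, X (Sum.inl j) ^ μ j).symm

end XiA

theorem stmt16_general (N r : ℕ) (hr : r ≤ N) (lam : Fin r → ℕ)
    (hpos : ∀ i, 0 < lam i) :
    (∑ α ∈ Fintype.piFinset (fun i : Fin r => Finset.Icc 1 (lam i)),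
        ((nperm r α : ℚ) / (nperm r lam : ℚ)) •
          ((∏ i : Fin r, esymAQ N (lam i - 1) (lam i - α i)) * msymQ N r hr α)) =
      MvPolynomial.map (Int.castRingHom ℚ)
        (∑ μ ∈ Finset.image
            (fun σ : Perm (Fin N) =>
              (fun j : Fin N => if h : (j : ℕ) < r then lam ⟨j, h⟩ else 0) ∘ σ)
            Finset.univ,
          xiaMonomial N μ) := by
  have hlam : ∀ i, lam i ≠ 0 := fun i => (hpos i).ne'
  have hnperm : nperm r lam ≠ 0 := prod_ne_zero_iff.2 fun _ _ => Nat.factorial_ne_zero _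
  have hrhs : (nperm r lam * (N - r).factorial) • map (Int.castRingHom ℚ)
      (∑ μ ∈ univ.image fun σ : Perm (Fin N) => padZero N lam ∘ σ, xiaMonomial N μ) =
        ∑ σ : Perm (Fin N), map (Int.castRingHom ℚ) (xiaMonomial N (padZero N lam ∘ σ)) := by
    rw [← map_nsmul, ← card_stabilizer_padZero hr lam hlam, ← sum_comp_perm_eq_card_smul,
      map_sum]
  apply nsmul_right_injective (mul_ne_zero hnperm (N - r).factorial_ne_zero)
  refine Eq.trans ?_ hrhs.symm
  simp_rw [map_xiaMonomial_padZero_comp_perm hr lam hpos]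
  rw [smul_sum, sum_comm]
  refine sum_congr rfl fun α hαmem => ?_
  have hα : ∀ i, α i ≠ 0 := fun i =>
    Nat.one_le_iff_ne_zero.1 (mem_Icc.1 (Fintype.mem_piFinset.1 hαmem i)).1
  rw [← mul_sum, ← card_smul_msymQ hr α hα, mul_smul_comm, ← Nat.cast_smul_eq_nsmul ℚ,
    ← Nat.cast_smul_eq_nsmul ℚ, smul_smul]
  congr 1
  push_cast
  field_simp

/-- The double monomial symmetric function
`m_λ(ξ|a) = Σ_{(1^r)⊆α⊆λ} (n(α)/n(λ)) e_{λ-α}(a) m_α(ξ)` (a priori with rational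
coefficients) equals the sum of the distinct permutations of `(ξ|a)^λ`; in particular it
has integer coefficients. -/
theorem stmt16 (N r : ℕ) (hr : r ≤ N) (lam : Fin r → ℕ)
    (hmono : Antitone lam) (hpos : ∀ i, 0 < lam i) :
    (∑ α ∈ Fintype.piFinset (fun i : Fin r => Finset.Icc 1 (lam i)),
        ((nperm r α : ℚ) / (nperm r lam : ℚ)) •
          ((∏ i : Fin r, esymAQ N (lam i - 1) (lam i - α i)) * msymQ N r hr α)) =
      MvPolynomial.map (Int.castRingHom ℚ)
        (∑ μ ∈ Finset.image
            (fun σ : Perm (Fin N) =>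
              (fun j : Fin N => if h : (j : ℕ) < r then lam ⟨j, h⟩ else 0) ∘ σ)
            Finset.univ,
          xiaMonomial N μ) :=
  stmt16_general N r hr lam hpos
end
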